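/- Let n ≥ 2 and let M be a cyclic group of order n (e.g., M = Multiplicative (ZMod n)). If R is a ring that is not commutative, then R is not M-central Armendariz. -/

import Mathlib

/-!
In the group ring of a finite group `G`, the element `1 - g` annihilates the norm element
`b · ∑ₓ x` for every `g`, since left multiplication by `g` permutes `G`. When `g ≠ 1` both
factors have the coefficient at the identity in their support, with product `1 · b = b`.
So if `R` is `G`-central Armendariz for a nontrivial finite group `G`, every `b` is central.
-/

def IsCentralArmendariz (R M : Type*) [Semiring R] [Monoid M] : Prop :=
  ∀ α β : MonoidAlgebra R M, α * β = 0 →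
    ∀ g ∈ α.coeff.support, ∀ h ∈ β.coeff.support, α.coeff g * β.coeff h ∈ Set.center R

namespace MonoidAlgebra

variable {R G : Type*} [Fintype G]

theorem coeff_sum_univ_single [Semiring R] (b : R) (x : G) :
    (∑ y : G, single y b).coeff x = b := by
  classical
  simp [coeff_sum, coeff_single, Finsupp.single_apply]

theorem single_mul_sum_univ_single [Group G] [Semiring R] (g : G) (b : R) :
    single g 1 * ∑ x : G, single x b = ∑ x : G, single x b := by
  simp only [Finset.mul_sum, single_mul_single, one_mul]
  exact Equiv.sum_comp (Equiv.mulLeft g) (fun x => single x b)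

theorem one_sub_single_mul_sum_univ_single [Group G] [Ring R] (g : G) (b : R) :
    (1 - single g 1) * ∑ x : G, single x b = 0 := by
  rw [sub_mul, single_mul_sum_univ_single, one_mul, sub_self]

end MonoidAlgebra

open MonoidAlgebra in
theorem IsCentralArmendariz.mem_center {R G : Type*} [Ring R] [Group G] [Fintype G]
    [Nontrivial G] (h : IsCentralArmendariz R G) (b : R) : b ∈ Set.center R := by
  obtain rfl | hb := eq_or_ne b 0
  · exact Set.zero_mem_center
  have : Nontrivial R := nontrivial_of_ne b 0 hb
  obtain ⟨g, hg⟩ := exists_ne (1 : G)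
  have hα : (1 - single g (1 : R)).coeff 1 = 1 := by
    simp [one_def, coeff_single, hg.symm]
  have hβ := coeff_sum_univ_single b (1 : G)
  have key := h _ _ (one_sub_single_mul_sum_univ_single g b)
    1 (Finsupp.mem_support_iff.mpr (hα.symm ▸ one_ne_zero))
    1 (Finsupp.mem_support_iff.mpr (hβ.symm ▸ hb))
  rwa [hα, hβ, one_mul] at key

/-- If `M` is a cyclic group of order `n ≥ 2` and `R` is a non-commutative ring,
then `R` is not `M`-central Armendariz. -/
theorem stmt_9 (n : ℕ) (hn : 2 ≤ n) (R : Type*) [Ring R]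
    (hnc : ¬ ∀ a b : R, a * b = b * a) :
    ¬ (∀ α β : MonoidAlgebra R (Multiplicative (ZMod n)), α * β = 0 →
      ∀ g ∈ α.coeff.support, ∀ h ∈ β.coeff.support, α.coeff g * β.coeff h ∈ Set.center R) := by
  have : Fact (1 < n) := ⟨hn⟩
  have : NeZero n := ⟨by omega⟩
  intro h
  exact hnc fun a b => ((Set.mem_center_iff.mp (IsCentralArmendariz.mem_center h b)).comm a).symm
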